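/- arXiv:1609.03497 — 5 statements merged into one kernel-verified Lean document; each statement's English description precedes it below -/
import Mathlib

section
/- For every integer n ≥ 1, the number of ∘-decorated Dyck paths of size n equals (2^{n−1}/(n+1))·binom(2n, n); equivalently, (n+1) times the cardinality of the set of ∘-decorated Dyck paths of size n equals 2^{n−1}·binom(2n, n). -/
open Finset

namespace DeltaCat

/-- `i`-th entry (0-indexed) of an area sequence, defaulting to `0`. -/
def ent (l : List ℕ) (i : ℕ) : ℕ := l.getD i 0

/-- `l` is the area sequence of a Dyck path (of size `l.length ≥ 1`): it is nonempty,
starts with `0`, and consecutive entries increase by at most one. -/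
def IsDyck (l : List ℕ) : Prop :=
  l ≠ [] ∧ ent l 0 = 0 ∧ ∀ i < l.length, i + 1 < l.length → ent l (i + 1) ≤ ent l i + 1

instance (l : List ℕ) : Decidable (IsDyck l) := by unfold IsDyck; infer_instance

/-- the area of a Dyck path -/
def area (l : List ℕ) : ℕ := l.sum

/-- the diagonal inversions of a Dyck path: pairs `(i,j)`, `i < j`, with
`a_i = a_j` or `a_i = a_j + 1` (0-indexed rows). -/
def dinvPairs (l : List ℕ) : Finset (ℕ × ℕ) :=
  (Finset.range l.length ×ˢ Finset.range l.length).filter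
    (fun p => p.1 < p.2 ∧ (ent l p.1 = ent l p.2 ∨ ent l p.1 = ent l p.2 + 1))

/-- the number of diagonal inversions -/
def dinv (l : List ℕ) : ℕ := (dinvPairs l).card

/-- `b'(k) = #{j > k : a_j = a_k} + #{j < k : a_j = a_k + 1}` (0-indexed rows). -/
def bval (l : List ℕ) (k : ℕ) : ℕ :=
  ((Finset.range l.length).filter (fun j => k < j ∧ ent l j = ent l k)).card +
  ((Finset.range l.length).filter (fun j => j < k ∧ ent l j = ent l k + 1)).card

/-- row `i` (0-indexed) is a double rise -/
def IsRise (l : List ℕ) (i : ℕ) : Prop := i + 1 < l.length ∧ ent l (i + 1) = ent l i + 1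

instance (l : List ℕ) (i : ℕ) : Decidable (IsRise l i) := by unfold IsRise; infer_instance

/-- row `i` (0-indexed) is a peak -/
def IsPeak (l : List ℕ) (i : ℕ) : Prop := i < l.length ∧ ¬ IsRise l i

instance (l : List ℕ) (i : ℕ) : Decidable (IsPeak l i) := by unfold IsPeak; infer_instance

/-- `Rise_∘(D,S)`: the decorated rows which are double rises -/
def riseSet (l : List ℕ) (S : Finset ℕ) : Finset ℕ := S.filter (fun i => IsRise l i)

/-- `Peak_∘(D,S)`: the decorated rows which are peaks -/
def peakSet (l : List ℕ) (S : Finset ℕ) : Finset ℕ := S.filter (fun i => IsPeak l i)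

/-- `area_∘(D,S)` -/
def areaC (l : List ℕ) (S : Finset ℕ) : ℕ := area l - ∑ i ∈ riseSet l S, ent l (i + 1)

/-- `dinv_∘(D,S)` -/
def dinvC (l : List ℕ) (S : Finset ℕ) : ℕ := dinv l - ∑ i ∈ peakSet l S, bval l i

/-- the largest row index (0-indexed) attaining the maximal area value -/
def lastMaxRow (l : List ℕ) : ℕ :=
  ((Finset.range l.length).filter
    (fun i => ∀ j ∈ Finset.range l.length, ent l j ≤ ent l i)).sup id

/-- `S` is a valid set of ∘-decorations on the rows of `l` : a set of rows not containing
the largest index attaining the maximal area value. -/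
def ValidDec (l : List ℕ) (S : Finset ℕ) : Prop :=
  (∀ i ∈ S, i < l.length) ∧ lastMaxRow l ∉ S

instance (l : List ℕ) (S : Finset ℕ) : Decidable (ValidDec l S) := by
  unfold ValidDec; infer_instance

/-- the (0-indexed) rows where the path touches the diagonal, i.e. the starts of segments -/
def segStarts (l : List ℕ) : List ℕ :=
  (List.range l.length).filter (fun i => ent l i == 0)

/-- the touch composition of a Dyck path: the list of lengths of the maximal segments -/
def touchComp (l : List ℕ) : List ℕ :=
  List.zipWith (fun cur next => next - cur) (segStarts l) ((segStarts l).drop 1 ++ [l.length])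

/-- the rise-touch composition `α^Rise(D,S)`: the touch composition with the number of
decorated double rises in each segment subtracted from the corresponding part. -/
def riseTouch (l : List ℕ) (S : Finset ℕ) : List ℕ :=
  List.zipWith
    (fun cur next => (next - cur) - ((riseSet l S).filter (fun i => cur ≤ i ∧ i < next)).card)
    (segStarts l) ((segStarts l).drop 1 ++ [l.length])

/-- all lists of length `n` with entries at most `n`; this contains every Dyck path
area sequence of size `n`. -/
def allSeqs (n : ℕ) : Finset (List ℕ) :=
  (Finset.univ : Finset (Fin n → Fin (n + 1))).image fun v => (List.ofFn v).map Fin.val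

/-- the Finset of all Dyck paths of size `n` (encoded by their area sequences) -/
def dyckPaths (n : ℕ) : Finset (List ℕ) := (allSeqs n).filter IsDyck

/-- the Finset of all ∘-decorated Dyck paths of size `n` -/
def decPaths (n : ℕ) : Finset (List ℕ × Finset ℕ) :=
  ((allSeqs n) ×ˢ (Finset.range n).powerset).filter fun p => IsDyck p.1 ∧ ValidDec p.1 p.2

/-- `Cat^Rise_{α,k,ℓ}(q,t)`, the generating function of ∘-decorated Dyck paths of size
`|α| + ℓ` with `k` decorated peaks, `ℓ` decorated double rises and rise-touch composition
`α`, by the statistics `dinv_∘` and `area_∘`; it is `0` when `k < 0` or `ℓ < 0`. -/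
def CatRise {R : Type*} [CommRing R] (q t : R) (α : List ℕ) (k ℓ : ℤ) : R :=
  if 0 ≤ k ∧ 0 ≤ ℓ then
    ∑ p ∈ (decPaths (α.sum + ℓ.toNat)).filter
        (fun p => (peakSet p.1 p.2).card = k.toNat ∧ (riseSet p.1 p.2).card = ℓ.toNat ∧
          riseTouch p.1 p.2 = α),
      q ^ dinvC p.1 p.2 * t ^ areaC p.1 p.2
  else 0

end DeltaCat

/-!
A decoration set of a Dyck path of size `n` is an arbitrary subset of its `n` rows avoiding
one distinguished row, so every path carries `2 ^ (n - 1)` of them. The Dyck paths are counted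
by the first-return decomposition: a nonempty area sequence is uniquely `0 :: (u + 1) ++ v` with
`u`, `v` area sequences (possibly empty), which is the Catalan recursion. It remains to use
`(n + 1) * catalan n = centralBinom n`.
-/

namespace DeltaCat

lemma mem_allSeqs {n : ℕ} {l : List ℕ} :
    l ∈ allSeqs n ↔ l.length = n ∧ ∀ x ∈ l, x ≤ n := by
  constructor
  · intro hl
    obtain ⟨v, -, rfl⟩ := mem_image.mp hl
    simp only [List.length_map, List.length_ofFn, List.mem_map, List.mem_ofFn, true_and]
    rintro _ ⟨_, ⟨i, rfl⟩, rfl⟩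
    exact Nat.lt_succ_iff.mp (v i).isLt
  · rintro ⟨rfl, hle⟩
    refine mem_image.mpr ⟨fun i => ⟨l[i], Nat.lt_succ_of_le (hle _ (List.getElem_mem _))⟩,
      mem_univ _, List.ext_getElem (by simp) fun i _ _ => by simp⟩

def IsAreaSeq (l : List ℕ) : Prop :=
  l.IsChain (fun a b => b ≤ a + 1) ∧ ∀ x ∈ l.head?, x = 0

lemma le_add_length_of_isChain : ∀ {t : List ℕ} {a k : ℕ},
    (a :: t).IsChain (fun a b => b ≤ a + 1) → a ≤ k → ∀ x ∈ a :: t, x ≤ k + t.length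
  | [], _, _, _, hak, x, hx => by simp_all
  | b :: t, a, k, hchain, hak, x, hx => by
    rw [List.isChain_cons_cons] at hchain
    have ih := le_add_length_of_isChain hchain.2 (show b ≤ k + 1 by omega)
    rcases List.mem_cons.mp hx with rfl | hx
    · simp only [List.length_cons]
      omega
    · simpa [add_assoc, add_comm 1] using ih x hx

lemma IsAreaSeq.lt_length {l : List ℕ} (hl : IsAreaSeq l) : ∀ x ∈ l, x < l.length := by
  obtain _ | ⟨a, t⟩ := l
  · simp
  · have ha : a = 0 := hl.2 a rfl
    intro x hx
    have := le_add_length_of_isChain hl.1 ha.le x hx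
    simp only [List.length_cons]
    omega

lemma isDyck_iff {l : List ℕ} : IsDyck l ↔ l ≠ [] ∧ IsAreaSeq l := by
  have hent : ∀ i (hi : i < l.length), ent l i = l[i] := fun i hi => by
    simp [ent, List.getD_eq_getElem?_getD, hi]
  refine and_congr_right fun hne => ?_
  rw [IsAreaSeq, List.isChain_iff_getElem]
  refine and_comm.trans (and_congr ⟨fun h i hi => ?_, fun h i _ hi => ?_⟩ ?_)
  · simpa [hent i (by omega), hent (i + 1) hi] using h i (by omega) hi
  · simpa [hent i (by omega), hent (i + 1) hi] using h i hi
  · obtain ⟨a, t, rfl⟩ := List.exists_cons_of_ne_nil hne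
    simp [ent]

instance : DecidablePred IsAreaSeq := fun l => by unfold IsAreaSeq; infer_instance

/-- Unlike `dyckPaths 0 = ∅`, `areaSeqs 0 = {[]}`, so the Catalan recursion holds from `m = 0`. -/
def areaSeqs (m : ℕ) : Finset (List ℕ) := {l ∈ allSeqs m | IsAreaSeq l}

lemma mem_areaSeqs {m : ℕ} {l : List ℕ} :
    l ∈ areaSeqs m ↔ l.length = m ∧ IsAreaSeq l := by
  rw [areaSeqs, mem_filter, mem_allSeqs]
  exact ⟨fun h => ⟨h.1.1, h.2⟩,
    fun ⟨hlen, hl⟩ => ⟨⟨hlen, fun x hx => hlen ▸ (hl.lt_length x hx).le⟩, hl⟩⟩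

lemma areaSeqs_zero : areaSeqs 0 = {[]} := by
  ext l
  rw [mem_areaSeqs, mem_singleton, List.length_eq_zero_iff]
  refine ⟨And.left, ?_⟩
  rintro rfl
  exact ⟨rfl, List.IsChain.nil, by simp⟩

lemma dyckPaths_eq_areaSeqs {n : ℕ} (hn : n ≠ 0) : dyckPaths n = areaSeqs n := by
  refine filter_congr fun l hl => ?_
  rw [isDyck_iff, and_iff_right]
  rintro rfl
  exact hn (mem_allSeqs.mp hl).1.symm

/-- First-return decomposition: the path first returns to the diagonal after the lifted `u`. -/
def glue (u v : List ℕ) : List ℕ := 0 :: (u.map (· + 1) ++ v)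

def split (l : List ℕ) : List ℕ × List ℕ :=
  ((l.tail.takeWhile (· ≠ 0)).map (· - 1), l.tail.dropWhile (· ≠ 0))

lemma length_glue (u v : List ℕ) : (glue u v).length = u.length + v.length + 1 := by
  simp [glue]

lemma isAreaSeq_glue {u v : List ℕ} (hu : IsAreaSeq u) (hv : IsAreaSeq v) :
    IsAreaSeq (glue u v) := by
  refine ⟨?_, by simp [glue]⟩
  rw [glue, List.isChain_cons, List.isChain_append]
  refine ⟨fun y hy => ?_,
    List.isChain_map_of_isChain _ (fun a b h => by omega) hu.1, hv.1,
    fun x _ y hy => by have := hv.2 y hy; omega⟩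
  obtain _ | ⟨a, u⟩ := u
  · have := hv.2 y (by simpa using hy)
    omega
  · obtain rfl : a = 0 := hu.2 a rfl
    simp_all

lemma split_glue (u : List ℕ) {v : List ℕ} (hv : IsAreaSeq v) : split (glue u v) = (u, v) := by
  have hpos : ∀ x ∈ u.map (· + 1), decide (x ≠ 0) = true := by simp
  have hv0 : v.takeWhile (· ≠ 0) = [] ∧ v.dropWhile (· ≠ 0) = v := by
    obtain _ | ⟨a, t⟩ := v
    · simp
    · obtain rfl : a = 0 := hv.2 a rfl
      simp
  rw [split, glue, List.tail_cons, List.takeWhile_append_of_pos hpos,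
    List.dropWhile_append_of_pos hpos, hv0.1, hv0.2, List.append_nil, List.map_map]
  simp [Function.comp_def]

lemma glue_split {l : List ℕ} (hl : IsAreaSeq l) (hne : l ≠ []) :
    glue (split l).1 (split l).2 = l := by
  obtain ⟨a, t, rfl⟩ := List.exists_cons_of_ne_nil hne
  obtain rfl : a = 0 := hl.2 a rfl
  have hlift : ((t.takeWhile (· ≠ 0)).map (· - 1)).map (· + 1) = t.takeWhile (· ≠ 0) := by
    rw [List.map_map]
    refine (List.map_congr_left fun x hx => ?_).trans (List.map_id _)
    have : x ≠ 0 := by simpa using List.mem_takeWhile_imp hx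
    simp only [Function.comp_apply, id_eq]
    omega
  rw [split, glue, List.tail_cons, hlift, List.takeWhile_append_dropWhile]

lemma isAreaSeq_split {l : List ℕ} (hl : IsAreaSeq l) :
    IsAreaSeq (split l).1 ∧ IsAreaSeq (split l).2 := by
  obtain _ | ⟨a, t⟩ := l
  · simp [split, IsAreaSeq]
  obtain rfl : a = 0 := hl.2 a rfl
  obtain ⟨hhead, ht⟩ := List.isChain_cons.mp hl.1
  refine ⟨⟨?_, fun x hx => ?_⟩, ht.suffix (List.dropWhile_suffix _), fun x hx => ?_⟩
  · exact List.isChain_map_of_isChain _ (fun a b h => by omega)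
      (ht.prefix (List.takeWhile_prefix _))
  · simp only [split, List.tail_cons, List.head?_map, List.head?_takeWhile, Option.mem_def,
      Option.map_eq_some_iff, Option.filter_eq_some_iff] at hx
    obtain ⟨y, ⟨hy, -⟩, rfl⟩ := hx
    have := hhead y hy
    omega
  · have := List.head?_dropWhile_not (· ≠ 0) t
    simp only [split, List.tail_cons, Option.mem_def] at hx
    rw [hx] at this
    simpa using this

lemma card_areaSeqs_succ (m : ℕ) :
    #(areaSeqs (m + 1)) = ∑ p ∈ antidiagonal m, #(areaSeqs p.1) * #(areaSeqs p.2) := by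
  simp_rw [← card_product]
  rw [← card_sigma]
  have mem_sigma_iff : ∀ {i j : ℕ} {u v : List ℕ},
      (⟨(i, j), (u, v)⟩ : (_ : ℕ × ℕ) × List ℕ × List ℕ) ∈
          (↑((antidiagonal m).sigma fun p => areaSeqs p.1 ×ˢ areaSeqs p.2) : Set _) ↔
        i + j = m ∧ (u.length = i ∧ IsAreaSeq u) ∧ (v.length = j ∧ IsAreaSeq v) := by
    intro i j u v
    rw [mem_coe, mem_sigma, HasAntidiagonal.mem_antidiagonal, mem_product, mem_areaSeqs,
      mem_areaSeqs]
  refine card_nbij' (fun l => ⟨((split l).1.length, (split l).2.length), split l⟩)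
    (fun x => glue x.2.1 x.2.2) (fun l hl => ?_) (fun x hx => ?_) (fun l hl => ?_) (fun x hx => ?_)
  · obtain ⟨hlen, hl⟩ := mem_areaSeqs.mp hl
    have hsum := length_glue (split l).1 (split l).2
    rw [glue_split hl (List.ne_nil_of_length_eq_add_one hlen)] at hsum
    obtain ⟨hu, hv⟩ := isAreaSeq_split hl
    exact mem_sigma_iff.mpr ⟨by omega, ⟨rfl, hu⟩, rfl, hv⟩
  · obtain ⟨⟨i, j⟩, u, v⟩ := x
    obtain ⟨rfl, ⟨rfl, hu⟩, rfl, hv⟩ := mem_sigma_iff.mp hx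
    exact mem_areaSeqs.mpr ⟨length_glue u v, isAreaSeq_glue hu hv⟩
  · obtain ⟨hlen, hl⟩ := mem_areaSeqs.mp hl
    exact glue_split hl (List.ne_nil_of_length_eq_add_one hlen)
  · obtain ⟨⟨i, j⟩, u, v⟩ := x
    obtain ⟨-, ⟨rfl, -⟩, rfl, hv⟩ := mem_sigma_iff.mp hx
    simp only [split_glue u hv]

theorem card_areaSeqs : ∀ m, #(areaSeqs m) = catalan m
  | 0 => by rw [areaSeqs_zero, card_singleton, catalan_zero]
  | m + 1 => by
    rw [card_areaSeqs_succ, catalan_succ']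
    refine sum_congr rfl fun p hp => ?_
    have := HasAntidiagonal.mem_antidiagonal.mp hp
    have : p.1 < m + 1 := by omega
    have : p.2 < m + 1 := by omega
    rw [card_areaSeqs p.1, card_areaSeqs p.2]

theorem card_dyckPaths {n : ℕ} (hn : n ≠ 0) : #(dyckPaths n) = catalan n := by
  rw [dyckPaths_eq_areaSeqs hn, card_areaSeqs]

lemma lastMaxRow_lt {l : List ℕ} (hl : l ≠ []) : lastMaxRow l < l.length := by
  have := List.length_pos_iff.mpr hl
  refine Nat.lt_of_le_pred this (Finset.sup_le fun i hi => ?_)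
  have := mem_range.mp (mem_filter.mp hi).1
  simp only [id, Nat.pred_eq_sub_one]
  omega

lemma mem_decPaths {n : ℕ} {p : List ℕ × Finset ℕ} :
    p ∈ decPaths n ↔ p.1 ∈ dyckPaths n ∧ p.2 ⊆ (range n).erase (lastMaxRow p.1) := by
  rw [decPaths, mem_filter, mem_product, mem_powerset, dyckPaths, mem_filter, subset_erase,
    ValidDec]
  constructor
  · rintro ⟨⟨hseq, hS⟩, hD, -, hmax⟩
    exact ⟨⟨hseq, hD⟩, hS, hmax⟩
  · rintro ⟨⟨hseq, hD⟩, hS, hmax⟩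
    refine ⟨⟨hseq, hS⟩, hD, fun i hi => ?_, hmax⟩
    rw [(mem_allSeqs.mp hseq).1]
    exact mem_range.mp (hS hi)

lemma card_decPaths_eq_mul {n : ℕ} (hn : n ≠ 0) :
    #(decPaths n) = #(dyckPaths n) * 2 ^ (n - 1) := by
  have hfiber :
      ∀ l ∈ dyckPaths n, #((range n).erase (lastMaxRow l)).powerset = 2 ^ (n - 1) := by
    intro l hl
    have hlen := (mem_allSeqs.mp (mem_filter.mp hl).1).1
    have hne : l ≠ [] := List.ne_nil_of_length_pos (by omega)
    rw [card_powerset, card_erase_of_mem (mem_range.mpr (hlen ▸ lastMaxRow_lt hne)),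
      card_range]
  rw [← smul_eq_mul, ← sum_const, ← sum_congr rfl hfiber, ← card_sigma]
  exact card_nbij' (fun p => ⟨p.1, p.2⟩) (fun x => (x.1, x.2))
    (fun p hp => by simpa only [mem_coe, mem_sigma, mem_powerset, mem_decPaths] using hp)
    (fun x hx => by simpa only [mem_coe, mem_sigma, mem_powerset, mem_decPaths] using hx)
    (fun _ _ => rfl) (fun _ _ => rfl)

end DeltaCat

open DeltaCat

/-- The number of ∘-decorated Dyck paths of size `n` is `2^(n-1)/(n+1) * binom(2n, n)`:
equivalently, `n + 1` times this number equals `2^(n-1) * binom(2n, n)`. -/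
theorem card_decPaths (n : ℕ) (hn : 1 ≤ n) :
    (n + 1) * (decPaths n).card = 2 ^ (n - 1) * Nat.choose (2 * n) n := by
  rw [card_decPaths_eq_mul (by omega), card_dyckPaths (by omega), ← mul_assoc,
    succ_mul_catalan_eq_centralBinom, Nat.centralBinom, mul_comm]
end

section
/- Let (D,S) be a ∘-decorated Dyck path of size n with rise_∘(D,S) = ℓ. Then every part of the rise-touch composition α^Rise(D,S) is a positive integer and the parts of α^Rise(D,S) sum to n − ℓ; that is, α^Rise(D,S) is a composition of n − ℓ. -/
open Finset

/-!
Each segment `[c, c')` between consecutive touch points contains at most `c' - c - 1` decorated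
double rises: a double rise `r` has `a_{r+1} > 0`, so `r + 1` is neither a touch point nor `n`,
hence `r ≤ c' - 2`. So every part is positive, and since no subtraction truncates, the parts
plus the rise counts telescope to `n`.
-/

namespace DeltaCat

section SegmentParts

variable (R : Finset ℕ)

def segmentParts (cuts : List ℕ) (n : ℕ) : List ℕ :=
  List.zipWith (fun c c' => (c' - c) - #{i ∈ R | c ≤ i ∧ i < c'}) cuts (cuts.drop 1 ++ [n])

theorem riseTouch_eq_segmentParts (l : List ℕ) (S : Finset ℕ) :
    riseTouch l S = segmentParts (riseSet l S) (segStarts l) l.length := rfl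

theorem segmentParts_singleton (a n : ℕ) :
    segmentParts R [a] n = [(n - a) - #{i ∈ R | a ≤ i ∧ i < n}] := rfl

theorem segmentParts_cons_cons (a b : ℕ) (s : List ℕ) (n : ℕ) :
    segmentParts R (a :: b :: s) n =
      ((b - a) - #{i ∈ R | a ≤ i ∧ i < b}) :: segmentParts R (b :: s) n := rfl

theorem card_filter_le_sub (a b : ℕ) : #{i ∈ R | a ≤ i ∧ i < b} ≤ b - a := by
  calc #{i ∈ R | a ≤ i ∧ i < b} ≤ #(Ico a b) :=
        card_le_card fun i hi => by simp only [mem_filter, mem_Ico] at hi ⊢; exact hi.2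
    _ = b - a := Nat.card_Ico a b

theorem card_filter_lt_sub {a b : ℕ} (hab : a < b) (hb : ∀ r ∈ R, r + 1 ≠ b) :
    #{i ∈ R | a ≤ i ∧ i < b} < b - a := by
  have hsub : {i ∈ R | a ≤ i ∧ i < b} ⊆ Ico a (b - 1) := fun i hi => by
    simp only [mem_filter, mem_Ico] at hi ⊢
    have := hb i hi.1
    omega
  have := card_le_card hsub
  rw [Nat.card_Ico] at this
  omega

theorem card_filter_add_card_filter {a b c : ℕ} (hab : a ≤ b) (hbc : b ≤ c) :
    #{i ∈ R | a ≤ i ∧ i < b} + #{i ∈ R | b ≤ i ∧ i < c} = #{i ∈ R | a ≤ i ∧ i < c} := by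
  rw [← card_union_of_disjoint (disjoint_filter.mpr fun i _ h₁ h₂ => by omega), ← filter_or]
  congr 1
  exact filter_congr fun i _ => by omega

theorem segmentParts_pos (n : ℕ) :
    ∀ (cuts : List ℕ), (cuts ++ [n]).Pairwise (· < ·) → (∀ r ∈ R, r + 1 ∉ cuts.drop 1 ++ [n]) →
      ∀ x ∈ segmentParts R cuts n, 0 < x
  | [], _, _ => by simp [segmentParts]
  | [a], hsorted, hR => by
    have han : a < n := List.rel_of_pairwise_cons hsorted (by simp)
    have := card_filter_lt_sub R han fun r hr h => hR r hr (by simp [h])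
    simp only [segmentParts_singleton, List.mem_singleton]
    omega
  | a :: b :: s, hsorted, hR => by
    have hab : a < b := List.rel_of_pairwise_cons hsorted (by simp)
    have := card_filter_lt_sub R hab fun r hr h => hR r hr (by simp [h])
    rw [segmentParts_cons_cons]
    intro x hx
    rcases List.mem_cons.mp hx with rfl | hx
    · omega
    · exact segmentParts_pos n (b :: s) (List.Pairwise.of_cons hsorted)
        (fun r hr h => hR r hr (by simp_all)) x hx

theorem segmentParts_sum_add_card (n : ℕ) :
    ∀ (a : ℕ) (s : List ℕ), (a :: s ++ [n]).Pairwise (· ≤ ·) →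
      (segmentParts R (a :: s) n).sum + #{i ∈ R | a ≤ i ∧ i < n} = n - a
  | a, [], _ => by
    have := card_filter_le_sub R a n
    simp only [segmentParts_singleton, List.sum_singleton]
    omega
  | a, b :: s, hsorted => by
    have hab : a ≤ b := List.rel_of_pairwise_cons hsorted (by simp)
    have hbn : b ≤ n := List.rel_of_pairwise_cons (List.Pairwise.of_cons hsorted) (by simp)
    have ih := segmentParts_sum_add_card n b s (List.Pairwise.of_cons hsorted)
    have := card_filter_le_sub R a b
    rw [segmentParts_cons_cons, List.sum_cons, ← card_filter_add_card_filter R hab hbn]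
    omega

end SegmentParts

theorem mem_segStarts {l : List ℕ} {i : ℕ} : i ∈ segStarts l ↔ i < l.length ∧ ent l i = 0 := by
  simp [segStarts]

theorem segStarts_append_length_pairwise (l : List ℕ) :
    (segStarts l ++ [l.length]).Pairwise (· < ·) :=
  List.pairwise_append.mpr ⟨List.pairwise_lt_range.filter _, List.pairwise_singleton _ _,
    fun _ hi _ hj => List.eq_of_mem_singleton hj ▸ (mem_segStarts.mp hi).1⟩

theorem segStarts_eq_zero_cons {l : List ℕ} (hl : IsDyck l) : ∃ s, segStarts l = 0 :: s := by
  obtain ⟨hne, h0, -⟩ := hl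
  obtain ⟨m, hm⟩ := Nat.exists_eq_succ_of_ne_zero (List.length_pos_iff.mpr hne).ne'
  unfold segStarts
  rw [hm, List.range_succ_eq_map, List.filter_cons]
  simp [h0]

theorem IsRise.succ_notMem_segStarts_append {l : List ℕ} {r : ℕ} (h : IsRise l r) :
    r + 1 ∉ segStarts l ++ [l.length] := by
  simp only [List.mem_append, mem_segStarts, List.mem_singleton, not_or]
  exact ⟨fun h' => absurd h'.2 (by rw [h.2]; omega), h.1.ne⟩

theorem length_eq_and_isDyck_of_mem_decPaths {n : ℕ} {p : List ℕ × Finset ℕ}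
    (hp : p ∈ decPaths n) : p.1.length = n ∧ IsDyck p.1 := by
  simp only [decPaths, allSeqs, mem_filter, mem_product, mem_image] at hp
  obtain ⟨⟨⟨v, -, hv⟩, -⟩, hdyck, -⟩ := hp
  exact ⟨by simp [← hv], hdyck⟩

end DeltaCat

open DeltaCat

/-- For a ∘-decorated Dyck path `(D, S)` of size `n` with `rise_∘(D,S) = ℓ`, the
rise-touch composition `α^Rise(D,S)` has positive parts summing to `n - ℓ`, i.e. it is a
composition of `n - ℓ`. -/
theorem riseTouch_is_composition (n : ℕ) (p : List ℕ × Finset ℕ) (hp : p ∈ decPaths n)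
    (ℓ : ℕ) (hℓ : (riseSet p.1 p.2).card = ℓ) :
    (∀ x ∈ riseTouch p.1 p.2, 0 < x) ∧ (riseTouch p.1 p.2).sum + ℓ = n := by
  obtain ⟨l, S⟩ := p
  obtain ⟨rfl, hdyck⟩ := length_eq_and_isDyck_of_mem_decPaths hp
  dsimp only at hℓ hdyck ⊢
  have hsorted := segStarts_append_length_pairwise l
  have hrise (r) (hr : r ∈ riseSet l S) : r + 1 ∉ segStarts l ++ [l.length] :=
    IsRise.succ_notMem_segStarts_append (mem_filter.mp hr).2
  have hrise_card : #{i ∈ riseSet l S | 0 ≤ i ∧ i < l.length} = ℓ := by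
    rw [← hℓ, filter_true_of_mem]
    intro r hr
    have := (mem_filter.mp hr).2.1
    omega
  rw [riseTouch_eq_segmentParts]
  refine ⟨segmentParts_pos _ _ _ hsorted fun r hr h => hrise r hr ?_, ?_⟩
  · exact ((List.drop_sublist 1 _).append_right _).subset h
  · obtain ⟨s, hs⟩ := segStarts_eq_zero_cons hdyck
    rw [hs] at hsorted ⊢
    have := segmentParts_sum_add_card (riseSet l S) l.length 0 s (hsorted.imp le_of_lt)
    omega
end

section
/- For every integer n ≥ 1, the following identity holds in the ring ℤ[q^{±1}, t^{±1}][z,w] of polynomials in z, w over Laurent polynomials in q, t: Σ_{D} q^{dinv(D)} t^{area(D)} · Π_{2 ≤ i ≤ n, b_i(D) > b_{i−1}(D)} (1 + z·q^{−b_i(D)}) · Π_{2 ≤ i ≤ n, a_i > a_{i−1}} (1 + w·t^{−a_i}), summed over all Dyck paths D of size n (with area sequence (a_1,…,a_n)), equals Σ_{(D,S)} q^{dinv_∘(D,S)} t^{area_∘(D,S)} z^{peak_∘(D,S)} w^{rise_∘(D,S)}, summed over all ∘-decorated Dyck paths (D,S) of size n. -/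
open Finset

namespace DeltaCat

/-- the list of rows of `l` (0-indexed) in reading order: rows are listed by decreasing
area value, and among rows of equal area value by decreasing row index. -/
def readingList (l : List ℕ) : List ℕ :=
  ((List.range (l.foldr max 0 + 1)).reverse.map
    fun v => ((List.range l.length).filter fun k => ent l k == v).reverse).flatten

/-- the `b`-sequence of `l` (0-indexed): `bAt l i` is `b'` of the row in
reading-order position `i`. -/
def bAt (l : List ℕ) (i : ℕ) : ℕ := bval l ((readingList l).getD i 0)

end DeltaCat

open DeltaCat

/-- Laurent polynomials in the two variables `q` and `t` over `ℤ`. -/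
abbrev LaurentQT := LaurentPolynomial (LaurentPolynomial ℤ)

/-- `q^m` as a Laurent polynomial in `q` and `t` -/
noncomputable def qpow (m : ℤ) : LaurentQT := LaurentPolynomial.C (LaurentPolynomial.T m)

/-- `t^m` as a Laurent polynomial in `q` and `t` -/
noncomputable def tpow (m : ℤ) : LaurentQT := LaurentPolynomial.T m

/-- the ring `ℤ[q^{±1}, t^{±1}][z,w]` -/
abbrev ZW := MvPolynomial (Fin 2) LaurentQT

/-- the variable `z` -/
noncomputable def z : ZW := MvPolynomial.X 0

/-- the variable `w` -/
noncomputable def w : ZW := MvPolynomial.X 1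

/-!
Expanding the two products on the left, a choice of factors is a set `S` of rows. The rows
`i ≥ 2` with `a_{i-1} < a_i` are exactly the rows following a double rise, and the reading-order
positions `i ≥ 2` with `b_{i-1} < b_i` are exactly the peaks other than the first row in reading
order, which is the last row of maximal height. The latter holds because, for rows `x`, `y`
adjacent in reading order, `b'(y) + #C = b'(x) + 1`, where `C` is the set of rows one level
above `y` that follow `y` (and precede `x` if `x` is on the level of `y`); by the Dyck
condition `C` is empty exactly when `y` is a peak. Since `dinv = Σ_k b'(k)`, the factors
`z q^{-b'(k)}` at decorated peaks and `w t^{-a_{k+1}}` at decorated double rises turn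
`q^dinv t^area` into `q^{dinv_∘} t^{area_∘} z^{peak_∘} w^{rise_∘}`.
-/

namespace DeltaCat

variable {l : List ℕ}

lemma ent_le_foldr_max {k : ℕ} (hk : k < l.length) : ent l k ≤ l.foldr max 0 := by
  rw [ent, List.getD_eq_getElem _ _ hk]
  exact List.le_max_of_le' 0 (List.getElem_mem hk) le_rfl

namespace IsDyck

lemma ent_succ_le (hl : IsDyck l) {i : ℕ} (h : i + 1 < l.length) :
    ent l (i + 1) ≤ ent l i + 1 :=
  hl.2.2 i (by omega) h

lemma exists_ent_eq_of_lt (hl : IsDyck l) {p q c : ℕ} (hpq : p ≤ q) (hq : q < l.length)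
    (hp : ent l p ≤ c) (hc : c < ent l q) : ∃ m, p ≤ m ∧ m < q ∧ ent l m = c := by
  induction q, hpq using Nat.le_induction with
  | base => omega
  | succ q hpq ih =>
    by_cases hcq : c < ent l q
    · obtain ⟨m, hpm, hmq, hm⟩ := ih (by omega) hcq
      exact ⟨m, hpm, by omega, hm⟩
    · exact ⟨q, hpq, by omega, by have := hl.ent_succ_le hq; omega⟩

lemma exists_ent_eq (hl : IsDyck l) {k v : ℕ} (hk : k < l.length) (hv : v ≤ ent l k) :
    ∃ j < l.length, ent l j = v := by
  rcases hv.lt_or_eq with hv | rfl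
  · obtain ⟨m, -, hmk, hm⟩ :=
      hl.exists_ent_eq_of_lt (Nat.zero_le k) hk (by rw [hl.2.1]; omega) hv
    exact ⟨m, by omega, hm⟩
  · exact ⟨k, hk, rfl⟩

lemma exists_ent_eq_between_of_not_isRise (hl : IsDyck l) {y j : ℕ} (hy : ¬ IsRise l y)
    (hyj : y < j) (hj : j < l.length) (hej : ent l j = ent l y + 1) :
    ∃ m, y < m ∧ m < j ∧ ent l m = ent l y := by
  have hy1 : y + 1 ≠ j := fun h => hy ⟨by omega, h ▸ hej⟩
  have hstep := hl.ent_succ_le (i := y) (by omega)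
  have hdown : ent l (y + 1) ≤ ent l y := by
    have : ent l (y + 1) ≠ ent l y + 1 := fun h => hy ⟨by omega, h⟩
    omega
  obtain ⟨m, hym, hmj, hm⟩ := hl.exists_ent_eq_of_lt (p := y + 1) (by omega) hj hdown (by omega)
  exact ⟨m, by omega, hmj, hm⟩

end IsDyck

lemma lastMaxRow_mem (hl : l ≠ []) :
    lastMaxRow l < l.length ∧ ∀ j < l.length, ent l j ≤ ent l (lastMaxRow l) := by
  have hne : {i ∈ range l.length | ∀ j ∈ range l.length, ent l j ≤ ent l i}.Nonempty := by
    obtain ⟨i, hi, hmax⟩ := (range l.length).exists_max_image (ent l) (by simpa using hl)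
    exact ⟨i, mem_filter.mpr ⟨hi, hmax⟩⟩
  obtain ⟨i, hi, hsup⟩ := exists_mem_eq_sup _ hne id
  rw [lastMaxRow, hsup]
  simpa using hi

lemma le_lastMaxRow {j : ℕ} (hj : j < l.length) (hmax : ∀ k < l.length, ent l k ≤ ent l j) :
    j ≤ lastMaxRow l :=
  le_sup (f := id) (mem_filter.mpr ⟨mem_range.mpr hj, fun k hk => hmax k (mem_range.mp hk)⟩)

lemma isPeak_lastMaxRow (hl : l ≠ []) : IsPeak l (lastMaxRow l) := by
  obtain ⟨hlt, hmax⟩ := lastMaxRow_mem hl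
  exact ⟨hlt, fun ⟨h1, h2⟩ => by have := hmax _ h1; omega⟩

def ReadingLT (l : List ℕ) (x y : ℕ) : Prop :=
  ent l y < ent l x ∨ (ent l x = ent l y ∧ y < x)

lemma ReadingLT.ne {x y : ℕ} (h : ReadingLT l x y) : x ≠ y := by
  rintro rfl; unfold ReadingLT at h; omega

lemma ReadingLT.not_readingLT {x y : ℕ} (h : ReadingLT l x y) : ¬ ReadingLT l y x := by
  unfold ReadingLT at *; omega

lemma readingLT_lastMaxRow (hl : l ≠ []) {k : ℕ} (hk : k < l.length)
    (hne : k ≠ lastMaxRow l) :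
    ReadingLT l (lastMaxRow l) k := by
  obtain ⟨-, hmax⟩ := lastMaxRow_mem hl
  rcases (hmax k hk).lt_or_eq with hlt | heq
  · exact Or.inl hlt
  · refine Or.inr ⟨heq.symm, lt_of_le_of_ne (le_lastMaxRow hk fun j hj => ?_) hne⟩
    exact heq ▸ hmax j hj

lemma mem_readingList {k : ℕ} : k ∈ readingList l ↔ k < l.length := by
  simp only [readingList, List.mem_flatten, List.mem_map, List.mem_reverse, List.mem_range]
  constructor
  · rintro ⟨_, ⟨v, -, rfl⟩, hk⟩
    exact List.mem_range.mp (List.mem_filter.mp (List.mem_reverse.mp hk)).1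
  · intro hk
    exact ⟨_, ⟨ent l k, Nat.lt_succ_of_le (ent_le_foldr_max hk), rfl⟩, by simp [hk]⟩

lemma pairwise_readingList : (readingList l).Pairwise (ReadingLT l) := by
  rw [readingList, List.pairwise_flatten, List.pairwise_map, List.pairwise_reverse]
  constructor
  · simp only [List.mem_map, List.mem_reverse, List.mem_range]
    rintro _ ⟨v, -, rfl⟩
    rw [List.pairwise_reverse]
    refine (List.pairwise_lt_range.filter _).imp_of_mem fun ha hb hab => ?_
    simp only [List.mem_filter, beq_iff_eq] at ha hb
    exact Or.inr ⟨by omega, hab⟩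
  · refine List.pairwise_lt_range.imp fun hab x hx y hy => ?_
    simp only [List.mem_reverse, List.mem_filter, beq_iff_eq] at hx hy
    exact Or.inl (by omega)

lemma nodup_readingList : (readingList l).Nodup :=
  pairwise_readingList.imp ReadingLT.ne

lemma length_readingList : (readingList l).length = l.length := by
  have hperm : (readingList l).Perm (List.range l.length) :=
    (List.perm_ext_iff_of_nodup nodup_readingList List.nodup_range).mpr fun k => by
      rw [mem_readingList, List.mem_range]
  simpa using hperm.length_eq

lemma getD_readingList_eq_getElem {i : ℕ} (hi : i < l.length) :
    (readingList l).getD i 0 = (readingList l)[i]'(hi.trans_eq length_readingList.symm) :=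
  List.getD_eq_getElem _ _ _

lemma getD_readingList_lt {i : ℕ} (hi : i < l.length) : (readingList l).getD i 0 < l.length := by
  rw [getD_readingList_eq_getElem hi, ← mem_readingList]
  exact List.getElem_mem _

lemma getD_readingList_inj {i j : ℕ} (hi : i < l.length) (hj : j < l.length)
    (h : (readingList l).getD i 0 = (readingList l).getD j 0) : i = j := by
  rwa [getD_readingList_eq_getElem hi, getD_readingList_eq_getElem hj,
    nodup_readingList.getElem_inj_iff] at h

lemma exists_getD_readingList_eq {k : ℕ} (hk : k < l.length) :
    ∃ i < l.length, (readingList l).getD i 0 = k := by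
  obtain ⟨i, hi, he⟩ := List.getElem_of_mem (mem_readingList.mpr hk)
  have hi' : i < l.length := hi.trans_eq length_readingList
  exact ⟨i, hi', by rw [getD_readingList_eq_getElem hi', he]⟩

lemma readingLT_getD_readingList {i j : ℕ} (hij : i < j) (hj : j < l.length) :
    ReadingLT l ((readingList l).getD i 0) ((readingList l).getD j 0) := by
  rw [getD_readingList_eq_getElem (hij.trans hj), getD_readingList_eq_getElem hj]
  exact List.pairwise_iff_getElem.mp pairwise_readingList _ _ _ _ hij

lemma not_readingLT_between {i k : ℕ} (hi : i + 1 < l.length) (hk : k < l.length) :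
    ¬ (ReadingLT l ((readingList l).getD i 0) k ∧
      ReadingLT l k ((readingList l).getD (i + 1) 0)) := by
  rintro ⟨hik, hki⟩
  obtain ⟨p, hp, rfl⟩ := exists_getD_readingList_eq hk
  rcases lt_trichotomy p i with h | rfl | h
  · exact (readingLT_getD_readingList h (by omega)).not_readingLT hik
  · exact hik.ne rfl
  · rcases (Nat.succ_le_of_lt h).lt_or_eq with h' | rfl
    · exact (readingLT_getD_readingList h' hp).not_readingLT hki
    · exact hki.ne rfl

lemma getD_readingList_zero (hl : l ≠ []) : (readingList l).getD 0 0 = lastMaxRow l := by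
  have hpos : 0 < l.length := List.length_pos_of_ne_nil hl
  by_contra hne
  obtain ⟨p, hp, hpe⟩ := exists_getD_readingList_eq (lastMaxRow_mem hl).1
  have hp0 : 0 < p := Nat.pos_of_ne_zero fun h => hne (h ▸ hpe)
  exact (readingLT_lastMaxRow hl (getD_readingList_lt hpos) hne).not_readingLT
    (hpe ▸ readingLT_getD_readingList hp0 hp)

lemma bval_add_card_eq_of_ent_eq {x y : ℕ} (hx : x < l.length) (hyx : y < x)
    (heq : ent l x = ent l y) (hgap : ∀ j, y < j → j < x → ent l j ≠ ent l y) :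
    bval l y + #{j ∈ range l.length | y < j ∧ j < x ∧ ent l j = ent l y + 1} =
      bval l x + 1 := by
  have hsame : {j ∈ range l.length | y < j ∧ ent l j = ent l y} =
      insert x {j ∈ range l.length | x < j ∧ ent l j = ent l x} := by
    ext j
    simp only [mem_insert, mem_filter, mem_range]
    constructor
    · rintro ⟨hj, hyj, hej⟩
      rcases lt_trichotomy j x with h | h | h
      · exact absurd hej (hgap j hyj h)
      · exact Or.inl h
      · exact Or.inr ⟨hj, h, by omega⟩
    · rintro (rfl | ⟨hj, hxj, hej⟩)
      · exact ⟨hx, hyx, heq⟩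
      · exact ⟨hj, by omega, by omega⟩
  have hup : {j ∈ range l.length | j < x ∧ ent l j = ent l x + 1} =
      {j ∈ range l.length | j < y ∧ ent l j = ent l y + 1} ∪
        {j ∈ range l.length | y < j ∧ j < x ∧ ent l j = ent l y + 1} := by
    ext j
    simp only [mem_union, mem_filter, mem_range]
    constructor
    · rintro ⟨hj, hjx, hej⟩
      rcases lt_or_gt_of_ne (show j ≠ y by rintro rfl; omega) with h | h
      · exact Or.inl ⟨hj, h, by omega⟩
      · exact Or.inr ⟨hj, h, hjx, by omega⟩
    · rintro (⟨hj, hjy, hej⟩ | ⟨hj, -, hjx, hej⟩) <;> exact ⟨hj, by omega, by omega⟩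
  have hdisj : Disjoint {j ∈ range l.length | j < y ∧ ent l j = ent l y + 1}
      {j ∈ range l.length | y < j ∧ j < x ∧ ent l j = ent l y + 1} :=
    disjoint_filter.mpr fun _ _ h1 h2 => by omega
  rw [bval, bval, hsame, hup, card_insert_of_notMem (by simp), card_union_of_disjoint hdisj]
  ring

lemma bval_add_card_eq_of_ent_eq_add_one (hl : IsDyck l) {x y : ℕ} (hx : x < l.length)
    (hxy : ent l x = ent l y + 1) (hfirst : ∀ j < x, ent l j ≠ ent l x)
    (hlast : ∀ j < l.length, y < j → ent l j ≠ ent l y) :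
    bval l y + #{j ∈ range l.length | y < j ∧ ent l j = ent l y + 1} = bval l x + 1 := by
  have hbelow_x : {j ∈ range l.length | j < x ∧ ent l j = ent l x + 1} = ∅ := by
    refine filter_eq_empty_iff.mpr fun j hj ⟨hjx, hej⟩ => ?_
    obtain ⟨m, -, hmj, hm⟩ := hl.exists_ent_eq_of_lt (c := ent l x) (Nat.zero_le j)
      (mem_range.mp hj) (by rw [hl.2.1]; omega) (by omega)
    exact hfirst m (by omega) hm
  have habove_y : {j ∈ range l.length | y < j ∧ ent l j = ent l y} = ∅ :=
    filter_eq_empty_iff.mpr fun j hj ⟨hyj, hej⟩ => hlast j (mem_range.mp hj) hyj hej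
  have hlevel : {j ∈ range l.length | ent l j = ent l y + 1} =
      insert x {j ∈ range l.length | x < j ∧ ent l j = ent l x} := by
    ext j
    simp only [mem_insert, mem_filter, mem_range]
    constructor
    · rintro ⟨hj, hej⟩
      rcases lt_trichotomy j x with h | h | h
      · exact absurd (by omega) (hfirst j h)
      · exact Or.inl h
      · exact Or.inr ⟨hj, h, by omega⟩
    · rintro (rfl | ⟨hj, -, hej⟩)
      · exact ⟨hx, hxy⟩
      · exact ⟨hj, by omega⟩
  have hsplit : #{j ∈ range l.length | j < y ∧ ent l j = ent l y + 1} +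
      #{j ∈ range l.length | y < j ∧ ent l j = ent l y + 1} =
        #{j ∈ range l.length | ent l j = ent l y + 1} := by
    rw [← card_filter_add_card_filter_not
        (s := {j ∈ range l.length | ent l j = ent l y + 1}) (· < y),
      filter_filter, filter_filter]
    congr 2 <;> ext j <;> simp only [mem_filter, mem_range] <;> grind
  rw [bval, bval, habove_y, hbelow_x, card_empty, zero_add, add_zero, hsplit, hlevel,
    card_insert_of_notMem (by simp)]

lemma bval_lt_iff_isPeak_of_ent_eq (hl : IsDyck l) {x y : ℕ} (hx : x < l.length) (hyx : y < x)
    (heq : ent l x = ent l y) (hgap : ∀ j, y < j → j < x → ent l j ≠ ent l y) :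
    bval l x < bval l y ↔ IsPeak l y := by
  have hkey := bval_add_card_eq_of_ent_eq hx hyx heq hgap
  suffices h :
      #{j ∈ range l.length | y < j ∧ j < x ∧ ent l j = ent l y + 1} = 0 ↔ IsPeak l y by
    rw [← h]; omega
  rw [card_eq_zero, filter_eq_empty_iff]
  constructor
  · refine fun hC => ⟨by omega, fun hr => hC (mem_range.mpr hr.1) ⟨by omega, ?_, hr.2⟩⟩
    have hrise : ent l (y + 1) = ent l y + 1 := hr.2
    by_contra hle
    obtain rfl : x = y + 1 := by omega
    omega
  · rintro ⟨-, hpk⟩ j hj ⟨hyj, hjx, hej⟩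
    obtain ⟨m, hym, hmj, hm⟩ :=
      hl.exists_ent_eq_between_of_not_isRise hpk hyj (mem_range.mp hj) hej
    exact hgap m hym (by omega) hm

lemma bval_lt_iff_isPeak_of_ent_eq_add_one (hl : IsDyck l) {x y : ℕ} (hx : x < l.length)
    (hy : y < l.length) (hxy : ent l x = ent l y + 1) (hfirst : ∀ j < x, ent l j ≠ ent l x)
    (hlast : ∀ j < l.length, y < j → ent l j ≠ ent l y) :
    bval l x < bval l y ↔ IsPeak l y := by
  have hkey := bval_add_card_eq_of_ent_eq_add_one hl hx hxy hfirst hlast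
  suffices h : #{j ∈ range l.length | y < j ∧ ent l j = ent l y + 1} = 0 ↔ IsPeak l y by
    rw [← h]; omega
  rw [card_eq_zero, filter_eq_empty_iff]
  constructor
  · exact fun hC => ⟨hy, fun hr => hC (mem_range.mpr hr.1) ⟨by omega, hr.2⟩⟩
  · rintro ⟨-, hpk⟩ j hj ⟨hyj, hej⟩
    have hjn := mem_range.mp hj
    obtain ⟨m, hym, hmj, hm⟩ :=
      hl.exists_ent_eq_between_of_not_isRise hpk hyj (mem_range.mp hj) hej
    exact hlast m (by omega) hym hm

lemma bval_lt_iff_isPeak_of_adjacent (hl : IsDyck l) {x y : ℕ} (hx : x < l.length)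
    (hy : y < l.length) (hxy : ReadingLT l x y)
    (hadj : ∀ k < l.length, ¬ (ReadingLT l x k ∧ ReadingLT l k y)) :
    bval l x < bval l y ↔ IsPeak l y := by
  rcases hxy with hlt | ⟨heq, hyx⟩
  · have hxy : ent l x = ent l y + 1 := by
      by_contra hne
      obtain ⟨k, hk, hek⟩ := hl.exists_ent_eq hx (v := ent l y + 1) (by omega)
      exact hadj k hk ⟨Or.inl (by omega), Or.inl (by omega)⟩
    exact bval_lt_iff_isPeak_of_ent_eq_add_one hl hx hy hxy
      (fun j hj hej => hadj j (by omega) ⟨Or.inr ⟨hej.symm, hj⟩, Or.inl (by omega)⟩)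
      (fun j hj hyj hej => hadj j hj ⟨Or.inl (by omega), Or.inr ⟨hej, hyj⟩⟩)
  · exact bval_lt_iff_isPeak_of_ent_eq hl hx hyx heq
      fun j hyj hjx hej => hadj j (by omega) ⟨Or.inr ⟨by omega, hjx⟩, Or.inr ⟨hej, hyj⟩⟩

lemma bAt_lt_bAt_succ_iff (hl : IsDyck l) {i : ℕ} (hi : i + 1 < l.length) :
    bAt l i < bAt l (i + 1) ↔ IsPeak l ((readingList l).getD (i + 1) 0) :=
  bval_lt_iff_isPeak_of_adjacent hl (getD_readingList_lt (by omega)) (getD_readingList_lt hi)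
    (readingLT_getD_readingList (Nat.lt_succ_self i) hi) fun _ hk => not_readingLT_between hi hk

lemma prod_filter_bAt_lt {M : Type*} [CommMonoid M] (hl : IsDyck l) (f : ℕ → M) :
    ∏ i ∈ (Ico 1 l.length).filter (fun i => bAt l (i - 1) < bAt l i), f (bAt l i) =
      ∏ k ∈ ((range l.length).erase (lastMaxRow l)).filter (IsPeak l ·), f (bval l k) := by
  have hasc : ∀ i ∈ Ico 1 l.length,
      (bAt l (i - 1) < bAt l i ↔ IsPeak l ((readingList l).getD i 0)) := by
    intro i hi
    obtain ⟨j, rfl⟩ : ∃ j, i = j + 1 := ⟨i - 1, by have := (mem_Ico.mp hi).1; omega⟩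
    simpa using bAt_lt_bAt_succ_iff hl (mem_Ico.mp hi).2
  have hzero : ∀ i < l.length, (readingList l).getD i 0 = lastMaxRow l → i = 0 := fun i hi h =>
    getD_readingList_inj hi (List.length_pos_of_ne_nil hl.1)
      (h.trans (getD_readingList_zero hl.1).symm)
  refine prod_nbij (fun i => (readingList l).getD i 0) ?_ ?_ ?_ fun _ _ => rfl
  · intro i hi
    obtain ⟨hiIco, hlt⟩ := mem_filter.mp hi
    have hi1 := mem_Ico.mp hiIco
    have hne : (readingList l).getD i 0 ≠ lastMaxRow l := fun h => by
      have := hzero i hi1.2 h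
      omega
    exact mem_filter.mpr ⟨mem_erase.mpr ⟨hne, mem_range.mpr (getD_readingList_lt hi1.2)⟩,
      (hasc i hiIco).mp hlt⟩
  · intro i hi j hj h
    exact getD_readingList_inj (mem_Ico.mp (mem_filter.mp hi).1).2
      (mem_Ico.mp (mem_filter.mp hj).1).2 h
  · intro k hk
    obtain ⟨hk, hpk⟩ := mem_filter.mp hk
    obtain ⟨hne, hk⟩ := mem_erase.mp hk
    obtain ⟨p, hp, rfl⟩ := exists_getD_readingList_eq (mem_range.mp hk)
    have hp0 : p ≠ 0 := by rintro rfl; exact hne (getD_readingList_zero hl.1)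
    have hpIco : p ∈ Ico 1 l.length := mem_Ico.mpr ⟨by omega, hp⟩
    exact ⟨p, mem_filter.mpr ⟨hpIco, (hasc p hpIco).mpr hpk⟩, rfl⟩

lemma prod_filter_ent_lt {M : Type*} [CommMonoid M] (hl : IsDyck l) (f : ℕ → M) :
    ∏ i ∈ (Ico 1 l.length).filter (fun i => ent l (i - 1) < ent l i), f (ent l i) =
      ∏ k ∈ (range l.length).filter (IsRise l ·), f (ent l (k + 1)) := by
  refine (prod_nbij' (· + 1) (· - 1) ?_ ?_ ?_ ?_ fun _ _ => rfl).symm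
  · intro k hk
    obtain ⟨-, hk1, hrise⟩ := mem_filter.mp hk
    exact mem_filter.mpr ⟨mem_Ico.mpr ⟨by omega, hk1⟩, by simp [hrise]⟩
  · intro i hi
    obtain ⟨hiIco, hlt⟩ := mem_filter.mp hi
    have hi1 := mem_Ico.mp hiIco
    have hstep := hl.ent_succ_le (i := i - 1) (by omega)
    rw [Nat.sub_add_cancel hi1.1] at hstep
    exact mem_filter.mpr ⟨mem_range.mpr (by omega),
      ⟨by omega, by rw [Nat.sub_add_cancel hi1.1]; omega⟩⟩
  · exact fun k _ => Nat.add_sub_cancel k 1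
  · exact fun i hi => Nat.sub_add_cancel (mem_Ico.mp (mem_filter.mp hi).1).1

lemma dinv_eq_sum_bval (l : List ℕ) : dinv l = ∑ k ∈ range l.length, bval l k := by
  simp only [dinv, dinvPairs, bval, card_filter, sum_product, sum_add_distrib]
  rw [sum_comm (f := fun k j => if j < k ∧ ent l j = ent l k + 1 then 1 else 0),
    ← sum_add_distrib]
  refine sum_congr rfl fun i _ => ?_
  rw [← sum_add_distrib]
  refine sum_congr rfl fun j _ => ?_
  split_ifs <;> omega

lemma area_eq_sum_ent (l : List ℕ) : area l = ∑ i ∈ range l.length, ent l i := by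
  induction l with
  | nil => rfl
  | cons a t ih =>
    rw [List.length_cons, sum_range_succ', area, List.sum_cons, ← area, ih]
    simp [ent, add_comm]

lemma qpow_add (a b : ℤ) : qpow (a + b) = qpow a * qpow b := by
  rw [qpow, qpow, qpow, LaurentPolynomial.T_add, map_mul]

lemma tpow_add (a b : ℤ) : tpow (a + b) = tpow a * tpow b :=
  LaurentPolynomial.T_add a b

lemma qpow_sum {ι : Type*} (s : Finset ι) (f : ι → ℤ) :
    qpow (∑ i ∈ s, f i) = ∏ i ∈ s, qpow (f i) := by
  classical
  induction s using Finset.induction_on with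
  | empty => simp [qpow, LaurentPolynomial.T_zero]
  | insert a s ha ih => rw [sum_insert ha, prod_insert ha, qpow_add, ih]

lemma tpow_sum {ι : Type*} (s : Finset ι) (f : ι → ℤ) :
    tpow (∑ i ∈ s, f i) = ∏ i ∈ s, tpow (f i) := by
  classical
  induction s using Finset.induction_on with
  | empty => exact LaurentPolynomial.T_zero
  | insert a s ha ih => rw [sum_insert ha, prod_insert ha, tpow_add, ih]

lemma qpow_dinvC (S : Finset ℕ) :
    qpow (dinvC l S) = qpow (dinv l) * ∏ i ∈ peakSet l S, qpow (-(bval l i : ℤ)) := by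
  have hle : ∑ i ∈ peakSet l S, bval l i ≤ dinv l := by
    rw [dinv_eq_sum_bval]
    exact sum_le_sum_of_subset fun i hi => mem_range.mpr (mem_filter.mp hi).2.1
  rw [← qpow_sum, ← qpow_add, dinvC, Nat.cast_sub hle, Nat.cast_sum, sum_neg_distrib,
    sub_eq_add_neg]

lemma tpow_areaC (S : Finset ℕ) :
    tpow (areaC l S) = tpow (area l) * ∏ i ∈ riseSet l S, tpow (-(ent l (i + 1) : ℤ)) := by
  have hle : ∑ i ∈ riseSet l S, ent l (i + 1) ≤ area l := by
    rw [area_eq_sum_ent, ← sum_image (g := (· + 1)) fun _ _ _ _ h => Nat.succ_injective h]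
    refine sum_le_sum_of_subset fun j hj => ?_
    obtain ⟨i, hi, rfl⟩ := mem_image.mp hj
    exact mem_range.mpr (mem_filter.mp hi).2.1
  rw [← tpow_sum, ← tpow_add, areaC, Nat.cast_sub hle, Nat.cast_sum, sum_neg_distrib,
    sub_eq_add_neg]

noncomputable def decWeight (l : List ℕ) (i : ℕ) : ZW :=
  if IsRise l i then w * MvPolynomial.C (tpow (-(ent l (i + 1) : ℤ)))
  else z * MvPolynomial.C (qpow (-(bval l i : ℤ)))

lemma C_mul_prod_decWeight {S : Finset ℕ} (hS : S ⊆ range l.length) :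
    MvPolynomial.C (qpow (dinv l) * tpow (area l)) * ∏ i ∈ S, decWeight l i =
      MvPolynomial.C (qpow (dinvC l S) * tpow (areaC l S)) *
        z ^ (peakSet l S).card * w ^ (riseSet l S).card := by
  have hpeak : S.filter (¬ IsRise l ·) = peakSet l S :=
    filter_congr fun i hi => ⟨fun h => ⟨mem_range.mp (hS hi), h⟩, And.right⟩
  simp only [decWeight]
  rw [prod_ite, hpeak, ← riseSet, qpow_dinvC, tpow_areaC]
  simp only [prod_mul_distrib, prod_const, ← map_prod, map_mul]
  ring

lemma prod_one_add_decWeight (hl : IsDyck l) :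
    ∏ k ∈ (range l.length).erase (lastMaxRow l), (1 + decWeight l k) =
      (∏ k ∈ ((range l.length).erase (lastMaxRow l)).filter (IsPeak l ·),
          (1 + z * MvPolynomial.C (qpow (-(bval l k : ℤ))))) *
        ∏ k ∈ (range l.length).filter (IsRise l ·),
          (1 + w * MvPolynomial.C (tpow (-(ent l (k + 1) : ℤ)))) := by
  have hrise : ((range l.length).erase (lastMaxRow l)).filter (IsRise l ·) =
      (range l.length).filter (IsRise l ·) := by
    rw [filter_erase, erase_eq_of_notMem fun h => (isPeak_lastMaxRow hl.1).2 (mem_filter.mp h).2]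
  have hpeak : ((range l.length).erase (lastMaxRow l)).filter (¬ IsRise l ·) =
      ((range l.length).erase (lastMaxRow l)).filter (IsPeak l ·) :=
    filter_congr fun i hi => ⟨fun h => ⟨mem_range.mp (mem_erase.mp hi).2, h⟩, And.right⟩
  simp only [decWeight, add_ite]
  rw [prod_ite, hrise, hpeak, mul_comm]

lemma length_of_mem_allSeqs {n : ℕ} {l : List ℕ} (h : l ∈ allSeqs n) : l.length = n := by
  obtain ⟨v, -, rfl⟩ := mem_image.mp h
  simp

lemma sum_decPaths {M : Type*} [AddCommMonoid M] (n : ℕ) (f : List ℕ × Finset ℕ → M) :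
    ∑ p ∈ decPaths n, f p =
      ∑ l ∈ dyckPaths n, ∑ S ∈ ((range n).erase (lastMaxRow l)).powerset, f (l, S) := by
  rw [decPaths, dyckPaths, sum_filter, sum_product, sum_filter]
  refine sum_congr rfl fun l hl => ?_
  by_cases hd : IsDyck l
  · rw [if_pos hd, ← sum_filter]
    refine sum_congr (ext fun S => ?_) fun _ _ => rfl
    simp only [mem_filter, mem_powerset, hd, true_and, ValidDec, length_of_mem_allSeqs hl,
      subset_iff, mem_erase, mem_range]
    grind
  · simp [hd]

end DeltaCat

theorem decorated_catalan_product_formula_general (n : ℕ) :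
    ∑ l ∈ dyckPaths n,
        (MvPolynomial.C (qpow (dinv l) * tpow (area l)) : ZW)
          * (∏ i ∈ (Finset.Ico 1 n).filter (fun i => bAt l (i - 1) < bAt l i),
              (1 + z * MvPolynomial.C (qpow (-(bAt l i : ℤ)))))
          * (∏ i ∈ (Finset.Ico 1 n).filter (fun i => ent l (i - 1) < ent l i),
              (1 + w * MvPolynomial.C (tpow (-(ent l i : ℤ)))))
      = ∑ p ∈ decPaths n,
          MvPolynomial.C (qpow (dinvC p.1 p.2) * tpow (areaC p.1 p.2))
            * z ^ (peakSet p.1 p.2).card * w ^ (riseSet p.1 p.2).card := by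
  rw [sum_decPaths]
  refine sum_congr rfl fun l hmem => ?_
  obtain ⟨hmem, hl⟩ := mem_filter.mp hmem
  obtain rfl := length_of_mem_allSeqs hmem
  rw [prod_filter_bAt_lt hl fun b => 1 + z * MvPolynomial.C (qpow (-(b : ℤ))),
    prod_filter_ent_lt hl fun a => 1 + w * MvPolynomial.C (tpow (-(a : ℤ))), mul_assoc,
    ← prod_one_add_decWeight hl, prod_one_add, mul_sum]
  exact sum_congr rfl fun S hS =>
    C_mul_prod_decWeight ((mem_powerset.mp hS).trans (erase_subset _ _))

/-- The two expressions for the four variable Catalan polynomial agree: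
`Σ_D q^{dinv(D)} t^{area(D)} Π_{b_i > b_{i-1}} (1 + z q^{-b_i}) Π_{a_i > a_{i-1}} (1 + w t^{-a_i})
 = Σ_{(D,S)} q^{dinv_∘} t^{area_∘} z^{peak_∘} w^{rise_∘}`,
where on the left the first product is over positions `2 ≤ i ≤ n` in reading order
(0-indexed: `1 ≤ i ≤ n-1`) and the second over rows `2 ≤ i ≤ n`. -/
theorem decorated_catalan_product_formula (n : ℕ) (hn : 1 ≤ n) :
    ∑ l ∈ dyckPaths n,
        (MvPolynomial.C (qpow (dinv l) * tpow (area l)) : ZW)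
          * (∏ i ∈ (Finset.Ico 1 n).filter (fun i => bAt l (i - 1) < bAt l i),
              (1 + z * MvPolynomial.C (qpow (-(bAt l i : ℤ)))))
          * (∏ i ∈ (Finset.Ico 1 n).filter (fun i => ent l (i - 1) < ent l i),
              (1 + w * MvPolynomial.C (tpow (-(ent l i : ℤ)))))
      = ∑ p ∈ decPaths n,
          MvPolynomial.C (qpow (dinvC p.1 p.2) * tpow (areaC p.1 p.2))
            * z ^ (peakSet p.1 p.2).card * w ^ (riseSet p.1 p.2).card :=
  decorated_catalan_product_formula_general n
end

section
/- Let D be a Dyck path of size n ≥ 2 with area sequence (a_1, …, a_n), and let p be defined by: p + 1 = min{j ≥ 2 : a_j = 0} if some a_j = 0 with j ≥ 2, and p = n otherwise (so rows 1, …, p form the part of D up to its first return to the diagonal). Then the sequence a' = (a_{p+1}, …, a_n, a_2 − 1, a_3 − 1, …, a_p − 1) is the area sequence of a Dyck path D' of size n − 1 (the cyclic rotation of D), and area(D') = area(D) − (p − 1). -/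
open Finset

namespace DeltaCat

/-- the 0-indexed position of the first return of the path to the diagonal
(`l.length` if the path never returns to the diagonal after the start). -/
def firstReturn (l : List ℕ) : ℕ :=
  if h : ((Finset.range l.length).filter (fun j => 1 ≤ j ∧ ent l j = 0)).Nonempty
  then ((Finset.range l.length).filter (fun j => 1 ≤ j ∧ ent l j = 0)).min' h
  else l.length

/-- the cyclic rotation of a Dyck path: the first segment is moved to the end,
with its first vertical step deleted. -/
def rotateD (l : List ℕ) : List ℕ :=
  l.drop (firstReturn l) ++ ((l.take (firstReturn l)).drop 1).map (fun x => x - 1)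

end DeltaCat

open DeltaCat

lemma sum_map_sub_one (L : List ℕ) (h : ∀ x ∈ L, 1 ≤ x) :
    (L.map (fun x => x - 1)).sum + L.length = L.sum := by
  induction L with
  | nil => simp
  | cons a t ih =>
    simp only [List.map_cons, List.sum_cons, List.length_cons]
    have h1 := h a (by simp)
    have h2 := ih (fun x hx => h x (by simp [hx]))
    omega

lemma firstReturn_spec (l : List ℕ) (hl : 1 ≤ l.length) :
    1 ≤ firstReturn l ∧ firstReturn l ≤ l.length ∧
      (∀ j, 1 ≤ j → j < firstReturn l → ent l j ≠ 0) ∧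
      (firstReturn l < l.length → ent l (firstReturn l) = 0) := by
  unfold firstReturn
  split
  case isTrue h =>
    have hmem := Finset.min'_mem _ h
    rw [Finset.mem_filter, Finset.mem_range] at hmem
    refine ⟨hmem.2.1, le_of_lt hmem.1, fun j hj1 hj2 hj0 => ?_, fun _ => hmem.2.2⟩
    have hle := Finset.min'_le _ j (show j ∈ (Finset.range l.length).filter
        (fun j => 1 ≤ j ∧ ent l j = 0) from by
      rw [Finset.mem_filter, Finset.mem_range]
      exact ⟨lt_trans hj2 hmem.1, hj1, hj0⟩)
    omega
  case isFalse h =>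
    refine ⟨hl, le_refl _, fun j hj1 hj2 hj0 => h ⟨j, ?_⟩, fun hc => absurd hc (lt_irrefl _)⟩
    rw [Finset.mem_filter, Finset.mem_range]
    exact ⟨hj2, hj1, hj0⟩

lemma take_one_sum (l : List ℕ) (hne : l ≠ []) : (l.take 1).sum = ent l 0 := by
  cases l with
  | nil => simp at hne
  | cons a t => simp [ent]

/-- The cyclic rotation of a Dyck path of size `n ≥ 2` is a Dyck path of size `n - 1`,
and its area is `area(D) - (p - 1)` where rows `1, …, p` (1-indexed) form the part of
`D` up to its first return to the diagonal (so `p = firstReturn l` 0-indexed). -/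
theorem rotateD_isDyck_area (l : List ℕ) (hl : IsDyck l) (h2 : 2 ≤ l.length) :
    IsDyck (rotateD l) ∧ (rotateD l).length = l.length - 1 ∧
      area (rotateD l) + (firstReturn l - 1) = area l := by
  obtain ⟨hne, h0, hstep⟩ := hl
  obtain ⟨hp1, hpn, hCpos, hD⟩ := firstReturn_spec l (by omega)
  set p := firstReturn l with hp
  -- lengths
  have hlen1 : (l.drop p).length = l.length - p := by simp
  have hlen2 : (((l.take p).drop 1).map (fun x => x - 1)).length = p - 1 := by
    simp [Nat.min_eq_left hpn]
  have hlen : (rotateD l).length = l.length - 1 := by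
    rw [rotateD, List.length_append, hlen1, hlen2]; omega
  -- entry computations
  have ent1 : ∀ i, i < l.length - p → ent (rotateD l) i = ent l (p + i) := by
    intro i hi
    rw [rotateD, ent, ent, List.getD_eq_getElem?_getD, List.getD_eq_getElem?_getD,
      List.getElem?_append, hlen1, if_pos hi, List.getElem?_drop]
  have ent2 : ∀ i, l.length - p ≤ i → i < l.length - 1 →
      ent (rotateD l) i = ent l (i - (l.length - p) + 1) - 1 := by
    intro i hi1 hi2
    rw [rotateD, ent, ent, List.getD_eq_getElem?_getD, List.getD_eq_getElem?_getD,
      List.getElem?_append, hlen1, if_neg (by omega), List.getElem?_map,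
      List.getElem?_drop, Nat.add_comm 1 (i - (l.length - p)), List.getElem?_take,
      if_pos (by omega : i - (l.length - p) + 1 < p),
      List.getElem?_eq_getElem (by omega : i - (l.length - p) + 1 < l.length)]
    simp
  have hent1le : ent l 1 ≤ 1 := by
    have h := hstep 0 (by omega) (by omega)
    rw [Nat.zero_add] at h
    omega
  refine ⟨⟨?_, ?_, ?_⟩, hlen, ?_⟩
  · -- nonempty
    intro hnil
    rw [hnil] at hlen
    simp at hlen
    omega
  · -- starts with 0
    by_cases hc : p < l.length
    · rw [ent1 0 (by omega)]
      simpa using hD hc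
    · rw [ent2 0 (by omega) (by omega)]
      have hz : ent l (0 - (l.length - p) + 1) ≤ 1 := by
        rw [show 0 - (l.length - p) + 1 = 1 from by omega]; exact hent1le
      omega
  · -- step condition
    intro i hi hi1
    rw [hlen] at hi hi1
    by_cases hc1 : i + 1 < l.length - p
    · rw [ent1 i (by omega), ent1 (i+1) hc1, ← Nat.add_assoc]
      exact hstep (p + i) (by omega) (by omega)
    · by_cases hc2 : i < l.length - p
      · -- boundary
        rw [ent2 (i+1) (by omega) (by omega)]
        have hz : ent l (i + 1 - (l.length - p) + 1) ≤ 1 := by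
          rw [show i + 1 - (l.length - p) + 1 = 1 from by omega]; exact hent1le
        omega
      · rw [ent2 i (by omega) (by omega), ent2 (i+1) (by omega) (by omega)]
        rw [show i + 1 - (l.length - p) + 1 = (i - (l.length - p) + 1) + 1 by omega]
        have := hstep (i - (l.length - p) + 1) (by omega) (by omega)
        omega
  · -- area
    have hsum : (rotateD l).sum =
        (l.drop p).sum + (((l.take p).drop 1).map (fun x => x - 1)).sum := by
      rw [rotateD, List.sum_append]
    have hpos : ∀ x ∈ (l.take p).drop 1, 1 ≤ x := by
      intro x hx
      obtain ⟨i, hilt, hieq⟩ := List.mem_iff_getElem.mp hx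
      have hlen' : ((l.take p).drop 1).length = p - 1 := by simp [Nat.min_eq_left hpn]
      rw [hlen'] at hilt
      have hgl : ((l.take p).drop 1)[i] = l[1 + i]'(by omega) := by
        rw [List.getElem_drop, List.getElem_take]
      have hcp := hCpos (1 + i) (by omega) (by omega)
      unfold ent at hcp
      rw [List.getD_eq_getElem l 0 (by omega : 1 + i < l.length)] at hcp
      omega
    have hsub := sum_map_sub_one _ hpos
    have hlen' : ((l.take p).drop 1).length = p - 1 := by simp [Nat.min_eq_left hpn]
    rw [hlen'] at hsub
    have htd : (l.take p).sum + (l.drop p).sum = l.sum := by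
      rw [← List.sum_append, List.take_append_drop]
    have hhead : (l.take p).sum = ent l 0 + ((l.take p).drop 1).sum := by
      have h1 : ((l.take p).take 1).sum + ((l.take p).drop 1).sum = (l.take p).sum :=
        List.sum_take_add_sum_drop _ 1
      rw [List.take_take, Nat.min_eq_left hp1, take_one_sum l hne] at h1
      omega
    unfold area
    rw [hsum]
    omega
end

section
/- Let D be a Dyck path of size n ≥ 2 with area sequence (a_1, …, a_n), let p be defined by: p + 1 = min{j ≥ 2 : a_j = 0} if some a_j = 0 with j ≥ 2, and p = n otherwise, and let D' be the cyclic rotation of D, i.e., the Dyck path of size n − 1 with area sequence (a_{p+1}, …, a_n, a_2 − 1, …, a_p − 1). Then dinv(D') = dinv(D) − (#{j : 1 ≤ j ≤ n, a_j = 0} − 1). -/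
/-! Write `D = 0 :: (u ++ v)` with `u` the rest of the first segment, whose entries are all
positive, so that the rotation is `v ++ (u - 1)`. The inversions of `D` involving its first row
are its pairs with the other zeros. `dinv` is additive over concatenation up to the inversions
between the two blocks; lowering every entry of `u` by one keeps the inversions inside `u`, and
moving `u - 1` behind `v` turns a cross inversion `(a, b)` with `a ∈ {b, b + 1}` into `(b, a - 1)`
with `b ∈ {a - 1, a}`, again an inversion. -/

open Finset

namespace DeltaCat

/-- The diagonal inversions of `u ++ v` with one row in `u` and the other in `v`. -/
def crossDinv (u v : List ℕ) : ℕ :=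
  (u.map fun a => v.countP fun b => a = b ∨ a = b + 1).sum

theorem card_filter_range_ent (P : ℕ → Prop) [DecidablePred P] (l : List ℕ) :
    ((range l.length).filter fun j => P (ent l j)).card = l.countP (fun b => P b) := by
  induction l with
  | nil => rfl
  | cons a t ih =>
    rw [card_filter, List.length_cons, sum_range_succ', ← card_filter, List.countP_cons]
    exact congrArg₂ (· + ·) ih (by simp [ent])

theorem dinv_eq_sum (l : List ℕ) :
    dinv l = ∑ i ∈ range l.length, ((range l.length).filter fun j =>
      i < j ∧ (ent l i = ent l j ∨ ent l i = ent l j + 1)).card := by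
  simp only [dinv, dinvPairs, card_filter, sum_product]

theorem dinv_nil : dinv [] = 0 := rfl

theorem dinv_cons (a : ℕ) (t : List ℕ) :
    dinv (a :: t) = t.countP (fun b => a = b ∨ a = b + 1) + dinv t := by
  rw [dinv_eq_sum, dinv_eq_sum, List.length_cons, sum_range_succ', add_comm,
    ← card_filter_range_ent]
  simp only [card_filter, sum_range_succ', ent, List.getD_cons_succ, List.getD_cons_zero]
  simp

theorem crossDinv_cons_left (a : ℕ) (u v : List ℕ) :
    crossDinv (a :: u) v = v.countP (fun b => a = b ∨ a = b + 1) + crossDinv u v := by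
  simp [crossDinv]

theorem crossDinv_cons_right (u : List ℕ) (c : ℕ) (w : List ℕ) :
    crossDinv u (c :: w) = u.countP (fun a => a = c ∨ a = c + 1) + crossDinv u w := by
  induction u with
  | nil => simp [crossDinv]
  | cons a u ih =>
    rw [crossDinv_cons_left, crossDinv_cons_left, ih, List.countP_cons, List.countP_cons]
    ring

theorem dinv_append (u v : List ℕ) : dinv (u ++ v) = dinv u + dinv v + crossDinv u v := by
  induction u with
  | nil => simp [dinv_nil, crossDinv]
  | cons a u ih =>
    rw [List.cons_append, dinv_cons, dinv_cons, ih, List.countP_append, crossDinv_cons_left]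
    ring

theorem dinv_map_sub_one {u : List ℕ} (hu : ∀ a ∈ u, 1 ≤ a) :
    dinv (u.map (· - 1)) = dinv u := by
  induction u with
  | nil => rfl
  | cons a u ih =>
    simp only [List.forall_mem_cons] at hu
    rw [List.map_cons, dinv_cons, dinv_cons, ih hu.2, List.countP_map]
    congr 1
    refine List.countP_congr fun b hb => ?_
    have hb1 := hu.2 b hb
    simp only [Function.comp, decide_eq_true_eq]
    omega

theorem crossDinv_map_sub_one {u : List ℕ} (hu : ∀ a ∈ u, 1 ≤ a) (v : List ℕ) :
    crossDinv v (u.map (· - 1)) = crossDinv u v := by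
  induction u with
  | nil => simp [crossDinv]
  | cons a u ih =>
    simp only [List.forall_mem_cons] at hu
    rw [List.map_cons, crossDinv_cons_right, crossDinv_cons_left, ih hu.2]
    congr 1
    refine List.countP_congr fun b _ => ?_
    simp only [decide_eq_true_eq]
    omega

theorem one_le_ent_of_lt_firstReturn {l : List ℕ} {j : ℕ} (hj : 1 ≤ j)
    (hjp : j < firstReturn l) : 1 ≤ ent l j := by
  by_contra! h0
  unfold firstReturn at hjp
  split_ifs at hjp with hne
  · have hjl : j < l.length :=
      hjp.trans (Finset.mem_range.1 (Finset.mem_filter.1 (min'_mem _ hne)).1)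
    have hmem : j ∈ (range l.length).filter (fun j => 1 ≤ j ∧ ent l j = 0) :=
      Finset.mem_filter.2 ⟨Finset.mem_range.2 hjl, hj, by omega⟩
    exact absurd (min'_le _ j hmem) (by omega)
  · exact hne ⟨j, Finset.mem_filter.2 ⟨Finset.mem_range.2 hjp, hj, by omega⟩⟩

theorem firstReturn_pos {l : List ℕ} (hl : l ≠ []) : 0 < firstReturn l := by
  unfold firstReturn
  split_ifs with h
  · exact (Finset.mem_filter.1 (min'_mem _ h)).2.1
  · exact List.length_pos_of_ne_nil hl

end DeltaCat

open DeltaCat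

theorem rotateD_dinv_general (l : List ℕ) (hl : IsDyck l) :
    dinv (rotateD l)
        + (((Finset.range l.length).filter (fun j => ent l j = 0)).card - 1)
      = dinv l := by
  obtain ⟨hne, h0, -⟩ := hl
  obtain ⟨p, hp⟩ := Nat.exists_eq_add_one.2 (firstReturn_pos hne)
  obtain ⟨a, t, rfl⟩ := List.exists_cons_of_ne_nil hne
  obtain rfl : a = 0 := h0
  have hu : ∀ x ∈ t.take p, 1 ≤ x := by
    intro x hx
    obtain ⟨j, hj, rfl⟩ := List.getElem_of_mem hx
    rw [List.length_take] at hj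
    have := one_le_ent_of_lt_firstReturn (l := 0 :: t) (Nat.le_add_left 1 j) (by omega)
    simpa [ent, List.getElem?_eq_getElem (show j < t.length by omega)] using this
  have hrot : rotateD (0 :: t) = t.drop p ++ (t.take p).map (· - 1) := by
    simp [rotateD, hp]
  have ht := (List.take_append_drop p t).symm
  generalize t.take p = u at hu hrot ht
  generalize t.drop p = v at hrot ht
  subst ht
  have hzero : (u ++ v).countP (fun b => 0 = b ∨ 0 = b + 1) = (u ++ v).countP (· = 0) :=
    List.countP_congr fun b _ => by simp [eq_comm]
  rw [card_filter_range_ent (· = 0), hrot, dinv_cons, dinv_append, dinv_append,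
    dinv_map_sub_one hu, crossDinv_map_sub_one hu, List.countP_cons, hzero]
  simp only [decide_true, if_true, Nat.add_sub_cancel]
  ring

/-- The cyclic rotation of a Dyck path of size `n ≥ 2` satisfies
`dinv(D') = dinv(D) - (#{j : a_j = 0} - 1)`. -/
theorem rotateD_dinv (l : List ℕ) (hl : IsDyck l) (h2 : 2 ≤ l.length) :
    dinv (rotateD l)
        + (((Finset.range l.length).filter (fun j => ent l j = 0)).card - 1)
      = dinv l :=
  rotateD_dinv_general l hl
end
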